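/- Let d, q ≥ 1. For every continuous map f : Δ_{d-1}^{(d+1)(q-1)} → ℝ^d there exists ε > 0 such that for every continuous map f̃ : Δ_{d-1}^{(d+1)(q-1)} → ℝ^d with sup_{x ∈ Δ_{d-1}^{(d+1)(q-1)}} ‖f̃(x) − f(x)‖ < ε (Euclidean norm on ℝ^d), every winding partition of f̃ is also a winding partition of f. -/

import Mathlib

open scoped BigOperators

noncomputable section

/-- Euclidean space `ℝ^d`. -/
abbrev Euc (d : ℕ) : Type := EuclideanSpace ℝ (Fin d)

/-- The standard `N`-simplex `Δ^N ⊆ ℝ^{N+1}`. -/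
def stdSimp (N : ℕ) : Set (Fin (N+1) → ℝ) :=
  {x | (∀ i, 0 ≤ x i) ∧ ∑ i, x i = 1}

/-- The face `σ_S` of `Δ^N` spanned by the vertices in `S`. -/
def simpFace {N : ℕ} (S : Finset (Fin (N+1))) : Set (Fin (N+1) → ℝ) :=
  {x ∈ stdSimp N | ∀ i ∉ S, x i = 0}

/-- The `k`-skeleton `Δ_k^N` of the standard `N`-simplex. -/
def skel (N k : ℕ) : Set (Fin (N+1) → ℝ) :=
  {x ∈ stdSimp N | {i | x i ≠ 0}.ncard ≤ k + 1}

/-- A Tverberg partition for (the relevant restriction of) `f`: a set of `q`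
pairwise disjoint nonempty vertex subsets whose faces have images with a common point. -/
def IsTverbergPartition (q : ℕ) {N d : ℕ}
    (f : (Fin (N+1) → ℝ) → Euc d) (P : Finset (Finset (Fin (N+1)))) : Prop :=
  P.card = q ∧ (∀ S ∈ P, S.Nonempty) ∧
  (∀ S ∈ P, ∀ T ∈ P, S ≠ T → Disjoint S T) ∧
  (⋂ S ∈ P, f '' simpFace S).Nonempty

/-- The boundary `∂σ_S` of the face `σ_S`. -/
def simpFaceBoundary {N : ℕ} (S : Finset (Fin (N+1))) : Set (Fin (N+1) → ℝ) :=
  {x ∈ simpFace S | ∃ i ∈ S, x i = 0}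

/-- `p ∈ W_{≠0}(f|_{∂σ_S})`: either `p` is in the image of the boundary, or the
corestriction of `f|_{∂σ_S}` to `ℝ^d \ {p}` is not nullhomotopic (there is no
continuous map agreeing with `f` on `∂σ_S` that is homotopic to a constant). -/
def InWne (d : ℕ) {N : ℕ} (f : (Fin (N+1) → ℝ) → Euc d)
    (S : Finset (Fin (N+1))) (p : Euc d) : Prop :=
  p ∈ f '' simpFaceBoundary S ∨
  ¬ ∃ (g : C(↥(simpFaceBoundary S), ↥({p}ᶜ : Set (Euc d))))
      (y : ↥({p}ᶜ : Set (Euc d))),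
      (∀ x : ↥(simpFaceBoundary S), (g x : Euc d) = f ↑x) ∧
      g.Homotopic (ContinuousMap.const _ y)

/-- A winding partition (in dimension `d`) for `f` defined on the `(d-1)`-skeleton:
`q` pairwise disjoint nonempty vertex subsets, each of size at most `d+1`, together
with a winding point `p`. -/
def IsWindingPartition (d q : ℕ) {N : ℕ}
    (f : (Fin (N+1) → ℝ) → Euc d) (P : Finset (Finset (Fin (N+1)))) : Prop :=
  P.card = q ∧ (∀ S ∈ P, S.Nonempty) ∧ (∀ S ∈ P, S.card ≤ d + 1) ∧
  (∀ S ∈ P, ∀ T ∈ P, S ≠ T → Disjoint S T) ∧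
  ∃ p : Euc d, ∀ S ∈ P,
    (S.card ≤ d → p ∈ f '' simpFace S) ∧
    (S.card = d + 1 → InWne d f S p)

/-!
Whether `P` is a winding partition of `f` is a combinatorial condition on `P` together with the
nonemptiness of `⋂ S ∈ P, windingSet d f S`. Lying outside `windingSet d f S` is an open condition
jointly in the map and the point: for a small face it means avoiding a compact image; for a full
face it means that the boundary map is nullhomotopic in the complement of the point, and a
straight-line homotopy to the perturbed map, followed by a translation of the point, preserves
this. Winding points of maps uniformly close to `f` lie in a fixed ball, because outside it the
boundary map is nullhomotopic through a convex set. Compactness of the ball makes the admissible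
perturbation uniform in the point, and there are only finitely many candidate partitions.
-/

open Set Filter Topology Metric

def ContinuousOn.restrictMapsTo {α β : Type*} [TopologicalSpace α] [TopologicalSpace β]
    {f : α → β} {s : Set α} {t : Set β} (hf : ContinuousOn f s) (h : MapsTo f s t) : C(s, t) :=
  ⟨h.restrict f s t, hf.mapsToRestrict h⟩

section Homotopy

variable {X E : Type*} [TopologicalSpace X] [AddCommGroup E] [Module ℝ E] [TopologicalSpace E]
  [IsTopologicalAddGroup E] [ContinuousSMul ℝ E]

theorem ContinuousMap.homotopic_of_segment_subset {Y : Set E} (U V : C(X, Y))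
    (h : ∀ x, segment ℝ (U x : E) (V x) ⊆ Y) : U.Homotopic V :=
  ⟨{ toFun := fun tx => ⟨AffineMap.lineMap (U tx.2 : E) (V tx.2) (tx.1 : ℝ),
        h tx.2 (lineMap_mem_segment ℝ _ _ tx.1.2)⟩
     continuous_toFun := by
       simp only [AffineMap.lineMap_apply_module]
       fun_prop
     map_zero_left := by simp
     map_one_left := by simp }⟩

theorem ContinuousMap.nullhomotopic_of_mem_convex {p c : E} {C : Set E} (hC : Convex ℝ C)
    (hpC : p ∉ C) (hc : c ∈ C) (F : C(X, ({p}ᶜ : Set E))) (hF : ∀ x, (F x : E) ∈ C) :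
    F.Nullhomotopic :=
  ⟨⟨c, fun hcp => hpC (hcp ▸ hc)⟩, homotopic_of_segment_subset _ _ fun x =>
    (hC.segment_subset (hF x) hc).trans fun _ hz hzp => hpC (hzp ▸ hz)⟩

def translateComplSingleton (p p' : E) : C(({p}ᶜ : Set E), ({p'}ᶜ : Set E)) :=
  ⟨MapsTo.restrict (· + (p' - p)) _ _ fun z hz hzp =>
      hz (by simpa using congrArg (· - (p' - p)) hzp),
    (continuous_add_const _).restrict _⟩

end Homotopy

theorem ContinuousMap.homotopic_of_norm_sub_lt {X E : Type*} [TopologicalSpace X]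
    [NormedAddCommGroup E] [NormedSpace ℝ E] {p : E} (U V : C(X, ({p}ᶜ : Set E)))
    (h : ∀ x, ‖(U x : E) - V x‖ < ‖(V x : E) - p‖) : U.Homotopic V :=
  homotopic_of_segment_subset U V fun x z hz (hzp : z = p) => by
    have := segment_subset_closedBall_right (U x : E) (V x) hz
    rw [mem_closedBall, hzp, dist_eq_norm, dist_eq_norm, ← norm_neg] at this
    exact (h x).not_ge (by simpa using this)

section Faces

variable {N : ℕ}

theorem isCompact_simpFace (S : Finset (Fin (N+1))) : IsCompact (simpFace S) := by
  have : simpFace S = stdSimplex ℝ (Fin (N+1)) ∩ ⋂ i ∉ S, {x | x i = 0} := by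
    ext x; simp [simpFace, stdSimp, stdSimplex]
  rw [this]
  exact (isCompact_stdSimplex ℝ _).inter_right <|
    isClosed_biInter fun i _ => isClosed_eq (continuous_apply i) continuous_const

theorem isCompact_simpFaceBoundary (S : Finset (Fin (N+1))) :
    IsCompact (simpFaceBoundary S) := by
  have : simpFaceBoundary S = simpFace S ∩ ⋃ i ∈ S, {x | x i = 0} := by
    ext x; simp [simpFaceBoundary]
  rw [this]
  exact (isCompact_simpFace S).inter_right <| S.finite_toSet.isClosed_biUnion fun i _ =>
    isClosed_eq (continuous_apply i) continuous_const

theorem ncard_ne_zero_le_card {α M : Type*} [Zero M] {x : α → M} {T : Finset α}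
    (hx : ∀ i ∉ T, x i = 0) : {i | x i ≠ 0}.ncard ≤ T.card :=
  calc {i | x i ≠ 0}.ncard ≤ (T : Set α).ncard :=
        Set.ncard_le_ncard (fun i hi => by_contra fun hiT => hi (hx i hiT)) T.finite_toSet
    _ = T.card := Set.ncard_coe_finset T

theorem simpFace_subset_skel {k : ℕ} {S : Finset (Fin (N+1))} (hS : S.card ≤ k + 1) :
    simpFace S ⊆ skel N k :=
  fun _ ⟨hx, hxS⟩ => ⟨hx, (ncard_ne_zero_le_card hxS).trans hS⟩

theorem simpFaceBoundary_subset_skel {k : ℕ} {S : Finset (Fin (N+1))} (hS : S.card ≤ k + 2) :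
    simpFaceBoundary S ⊆ skel N k := by
  rintro x ⟨⟨hx, hxS⟩, i, hi, hxi⟩
  refine ⟨hx, (ncard_ne_zero_le_card (T := S.erase i) fun j hj => ?_).trans ?_⟩
  · by_cases hji : j = i
    · exact hji ▸ hxi
    · exact hxS j fun hjS => hj (Finset.mem_erase.2 ⟨hji, hjS⟩)
  · rw [Finset.card_erase_of_mem hi]
    omega

theorem skel_eq_biUnion_simpFace (N k : ℕ) :
    skel N k = ⋃ T ∈ {T : Finset (Fin (N+1)) | T.card ≤ k + 1}, simpFace T := by
  refine Subset.antisymm (fun x hx => ?_) (iUnion₂_subset fun T hT => simpFace_subset_skel hT)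
  classical
  refine mem_biUnion (x := Finset.univ.filter (x · ≠ 0)) ?_ ⟨hx.1, fun i hi => ?_⟩
  · rw [mem_ofPred_eq, ← Set.ncard_coe_finset, Finset.coe_filter]
    simpa using hx.2
  · simpa using hi

theorem isCompact_skel (N k : ℕ) : IsCompact (skel N k) := by
  rw [skel_eq_biUnion_simpFace]
  exact (Set.toFinite _).isCompact_biUnion fun T _ => isCompact_simpFace T

end Faces

theorem IsCompact.eventually_forall_mem_of_forall_eventually {α Y : Type*} [TopologicalSpace Y]
    {l : Filter α} {K : Set Y} (hK : IsCompact K) {P : α → Y → Prop}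
    (hP : ∀ y ∈ K, ∀ᶠ z : α × Y in l ×ˢ 𝓝 y, P z.1 z.2) : ∀ᶠ x in l, ∀ y ∈ K, P x y :=
  Eventually.curry (hK.mem_prod_nhdsSet_of_forall hP : ∀ᶠ z in l ×ˢ 𝓝ˢ K, P z.1 z.2)
    |>.mono fun _ h => h.self_of_nhdsSet

theorem IsCompact.exists_pos_le_norm_sub {X E : Type*} [TopologicalSpace X]
    [NormedAddCommGroup E] {K : Set X} (hK : IsCompact K) {f : X → E} (hf : ContinuousOn f K)
    {p : E} (hp : p ∉ f '' K) : ∃ r > 0, ∀ x ∈ K, r ≤ ‖f x - p‖ := by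
  obtain ⟨r, hr, hball⟩ :=
    Metric.isOpen_iff.1 (hK.image_of_continuousOn hf).isClosed.isOpen_compl p hp
  refine ⟨r, hr, fun x hx => not_lt.1 fun hxr => hball ?_ (mem_image_of_mem f hx)⟩
  rwa [mem_ball, dist_eq_norm]

section UniformNhdsOn

variable {X E : Type*} [NormedAddCommGroup E]

def uniformNhdsOn (K : Set X) (f : X → E) : Filter (X → E) :=
  ⨅ ε > (0 : ℝ), 𝓟 {g | ∀ x ∈ K, ‖g x - f x‖ < ε}

theorem hasBasis_uniformNhdsOn (K : Set X) (f : X → E) :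
    (uniformNhdsOn K f).HasBasis (fun ε : ℝ => 0 < ε) fun ε => {g | ∀ x ∈ K, ‖g x - f x‖ < ε} :=
  hasBasis_biInf_principal' (fun ε hε δ hδ => ⟨min ε δ, lt_min hε hδ,
    fun _ hg x hx => (hg x hx).trans_le (min_le_left ε δ),
    fun _ hg x hx => (hg x hx).trans_le (min_le_right ε δ)⟩) ⟨1, one_pos⟩

theorem hasBasis_uniformNhdsOn_prod_nhds {F : Type*} [PseudoMetricSpace F] (K : Set X)
    (f : X → E) (p : F) :
    (uniformNhdsOn K f ×ˢ 𝓝 p).HasBasis (fun ε : ℝ => 0 < ε)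
      fun ε => {g | ∀ x ∈ K, ‖g x - f x‖ < ε} ×ˢ ball p ε :=
  (hasBasis_uniformNhdsOn K f).prod_same_index_mono nhds_basis_ball
    (fun _ _ _ _ hεδ _ hg x hx => (hg x hx).trans_le hεδ) fun _ _ _ _ hεδ => ball_subset_ball hεδ

theorem uniformNhdsOn_mono {K K' : Set X} (h : K' ⊆ K) (f : X → E) :
    uniformNhdsOn K f ≤ uniformNhdsOn K' f :=
  iInf₂_mono fun _ _ => principal_mono.2 fun _ hg x hx => hg x (h hx)

theorem eventually_notMem_image_of_isCompact [TopologicalSpace X] {K : Set X} (hK : IsCompact K)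
    {f : X → E} (hf : ContinuousOn f K) {p : E} (hp : p ∉ f '' K) :
    ∀ᶠ gp in uniformNhdsOn K f ×ˢ 𝓝 p, gp.2 ∉ gp.1 '' K := by
  obtain ⟨r, hr, hfar⟩ := hK.exists_pos_le_norm_sub hf hp
  refine (hasBasis_uniformNhdsOn_prod_nhds K f p).eventually_iff.2 ⟨r / 2, half_pos hr, ?_⟩
  rintro ⟨g, p'⟩ ⟨hgf, hp'⟩ ⟨x, hx, hgx : g x = p'⟩
  rw [mem_ball, dist_eq_norm, ← hgx] at hp'
  have hgfx : ‖f x - g x‖ < r / 2 := norm_sub_rev (g x) (f x) ▸ hgf x hx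
  linarith [hfar x hx, norm_sub_le_norm_sub_add_norm_sub (f x) (g x) p]

end UniformNhdsOn

section Winding

variable {d N : ℕ} {f g : (Fin (N+1) → ℝ) → Euc d} {S : Finset (Fin (N+1))} {p : Euc d}

def windingSet (d : ℕ) (f : (Fin (N+1) → ℝ) → Euc d) (S : Finset (Fin (N+1))) : Set (Euc d) :=
  {p | (S.card ≤ d → p ∈ f '' simpFace S) ∧ (S.card = d + 1 → InWne d f S p)}

theorem not_inWne_of_nullhomotopic (hf : ContinuousOn f (simpFaceBoundary S))
    (hp : MapsTo f (simpFaceBoundary S) {p}ᶜ) (h : (hf.restrictMapsTo hp).Nullhomotopic) :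
    ¬ InWne d f S p := by
  rintro (⟨x, hx, hxp⟩ | hne)
  · exact hp hx hxp
  · obtain ⟨y, hy⟩ := h
    exact hne ⟨_, y, fun _ => rfl, hy⟩

theorem exists_nullhomotopic_of_not_inWne (h : ¬ InWne d f S p) :
    ∃ G : C(simpFaceBoundary S, ({p}ᶜ : Set (Euc d))),
      (∀ x, (G x : Euc d) = f x) ∧ G.Nullhomotopic := by
  simp only [InWne, not_or, not_not] at h
  obtain ⟨-, G, y, hG, hy⟩ := h
  exact ⟨G, hG, y, hy⟩

theorem windingSet_subset_closedBall (hd : 1 ≤ d) (hS : S.card ≤ d + 1)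
    (hg : ContinuousOn g (skel N (d-1))) {R : ℝ} (hR : 0 ≤ R)
    (hgR : MapsTo g (skel N (d-1)) (closedBall 0 R)) : windingSet d g S ⊆ closedBall 0 R := by
  rintro p ⟨hsmall, hfull⟩
  by_contra hpR
  rcases hS.lt_or_eq with hlt | heq
  · obtain ⟨x, hx, rfl⟩ := hsmall (by omega)
    exact hpR (hgR (simpFace_subset_skel (by omega) hx))
  · have hsub : simpFaceBoundary S ⊆ skel N (d-1) := simpFaceBoundary_subset_skel (by omega)
    refine not_inWne_of_nullhomotopic (hg.mono hsub)
      (fun x hx (hxp : g x = p) => hpR (hxp ▸ hgR (hsub hx))) ?_ (hfull heq)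
    exact ContinuousMap.nullhomotopic_of_mem_convex (convex_closedBall 0 R) hpR
      (mem_closedBall_self hR) _ fun x => hgR (hsub x.2)

theorem eventually_not_inWne (hf : ContinuousOn f (simpFaceBoundary S)) (hp : ¬ InWne d f S p) :
    ∀ᶠ gp in uniformNhdsOn (simpFaceBoundary S) f ×ˢ 𝓝 p,
      ContinuousOn gp.1 (simpFaceBoundary S) → ¬ InWne d gp.1 S gp.2 := by
  obtain ⟨G, hGf, hGnull⟩ := exists_nullhomotopic_of_not_inWne hp
  obtain ⟨r, hr, hfar⟩ := (isCompact_simpFaceBoundary S).exists_pos_le_norm_sub hf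
    fun ⟨x, hx, hxp⟩ => (G ⟨x, hx⟩).2 (hGf ⟨x, hx⟩ ▸ hxp)
  refine (hasBasis_uniformNhdsOn_prod_nhds _ f p).eventually_iff.2 ⟨r / 2, half_pos hr, ?_⟩
  rintro ⟨g, p'⟩ ⟨hgf, hp'⟩ hg
  rw [mem_ball, dist_eq_norm] at hp'
  have hleash : ∀ x ∈ simpFaceBoundary S, ‖g x - (f x + (p' - p))‖ < ‖f x + (p' - p) - p'‖ := by
    intro x hx
    rw [show f x + (p' - p) - p' = f x - p by abel,
      show g x - (f x + (p' - p)) = (g x - f x) - (p' - p) by abel]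
    linarith [norm_sub_le (g x - f x) (p' - p), hgf x hx, hfar x hx]
  have hmaps : MapsTo g (simpFaceBoundary S) {p'}ᶜ := fun x hx (hxp : g x = p') =>
    (hleash x hx).not_ge (by rw [hxp, norm_sub_rev])
  obtain ⟨y, hy⟩ := hGnull.comp_right (translateComplSingleton p p')
  refine not_inWne_of_nullhomotopic hg hmaps ⟨y, ContinuousMap.Homotopic.trans ?_ hy⟩
  refine ContinuousMap.homotopic_of_norm_sub_lt _ _ fun x => ?_
  have := hleash x x.2
  rw [← hGf x] at this
  exact this

theorem eventually_notMem_windingSet (hd : 1 ≤ d) (hf : ContinuousOn f (skel N (d-1)))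
    (hp : p ∉ windingSet d f S) :
    ∀ᶠ gp in uniformNhdsOn (skel N (d-1)) f ×ˢ 𝓝 p,
      ContinuousOn gp.1 (skel N (d-1)) → gp.2 ∉ windingSet d gp.1 S := by
  simp only [windingSet, mem_ofPred_eq, not_and_or, Classical.not_imp] at hp
  rcases hp with ⟨hS, hpS⟩ | ⟨hS, hpS⟩
  · have hsub : simpFace S ⊆ skel N (d-1) := simpFace_subset_skel (by omega)
    refine ((eventually_notMem_image_of_isCompact (isCompact_simpFace S) (hf.mono hsub) hpS)
      |>.filter_mono (prod_mono (uniformNhdsOn_mono hsub f) le_rfl)).mono ?_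
    exact fun gp hgp _ hmem => hgp (hmem.1 hS)
  · have hsub : simpFaceBoundary S ⊆ skel N (d-1) := simpFaceBoundary_subset_skel (by omega)
    refine ((eventually_not_inWne (hf.mono hsub) hpS)
      |>.filter_mono (prod_mono (uniformNhdsOn_mono hsub f) le_rfl)).mono ?_
    exact fun gp hgp hg hmem => hgp (hg.mono hsub) (hmem.2 hS)

theorem eventually_not_isWindingPartition {q : ℕ} (hd : 1 ≤ d)
    (hf : ContinuousOn f (skel N (d-1))) {P : Finset (Finset (Fin (N+1)))}
    (hP : ¬ IsWindingPartition d q f P) :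
    ∀ᶠ g in uniformNhdsOn (skel N (d-1)) f,
      ContinuousOn g (skel N (d-1)) → ¬ IsWindingPartition d q g P := by
  by_cases hcomb : P.card = q ∧ (∀ S ∈ P, S.Nonempty) ∧ (∀ S ∈ P, S.card ≤ d + 1) ∧
      (∀ S ∈ P, ∀ T ∈ P, S ≠ T → Disjoint S T)
  swap
  · exact Eventually.of_forall fun g _ ⟨h₁, h₂, h₃, h₄, _⟩ => hcomb ⟨h₁, h₂, h₃, h₄⟩
  have hbad : ∀ p, ∃ S ∈ P, p ∉ windingSet d f S := fun p => by
    by_contra! hp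
    exact hP ⟨hcomb.1, hcomb.2.1, hcomb.2.2.1, hcomb.2.2.2, p, hp⟩
  obtain ⟨S₀, hS₀, -⟩ := hbad 0
  obtain ⟨R, hR⟩ := (isCompact_skel N (d-1)).exists_bound_of_continuousOn hf
  set B := closedBall (0 : Euc d) (max R 0 + 1)
  have hbounded : ∀ᶠ g in uniformNhdsOn (skel N (d-1)) f, MapsTo g (skel N (d-1)) B := by
    refine (hasBasis_uniformNhdsOn _ f).eventually_iff.2 ⟨1, one_pos, fun g hg x hx => ?_⟩
    rw [mem_closedBall, dist_zero_right]
    linarith [norm_le_norm_sub_add (g x) (f x), hg x hx, hR x hx, le_max_left R 0]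
  have hnowhere : ∀ᶠ g in uniformNhdsOn (skel N (d-1)) f, ∀ p ∈ B,
      ContinuousOn g (skel N (d-1)) → ∃ S ∈ P, p ∉ windingSet d g S := by
    refine (isCompact_closedBall _ _).eventually_forall_mem_of_forall_eventually fun p _ => ?_
    obtain ⟨S, hS, hpS⟩ := hbad p
    exact (eventually_notMem_windingSet hd hf hpS).mono fun gp h hg => ⟨S, hS, h hg⟩
  filter_upwards [hbounded, hnowhere] with g hgB hg hgc hgP
  obtain ⟨-, -, -, -, p, hp⟩ := hgP
  have hpB : p ∈ B := windingSet_subset_closedBall hd (hcomb.2.2.1 S₀ hS₀) hgc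
    (by positivity) hgB (hp S₀ hS₀)
  obtain ⟨S, hS, hpS⟩ := hg p hpB hgc
  exact hpS (hp S hS)

end Winding

theorem winding_partition_stable_general (d q : ℕ) (hd : 1 ≤ d)
    (f : (Fin ((d+1)*(q-1)+1) → ℝ) → Euc d)
    (hf : ContinuousOn f (skel ((d+1)*(q-1)) (d-1))) :
    ∃ ε > (0:ℝ), ∀ g : (Fin ((d+1)*(q-1)+1) → ℝ) → Euc d,
      ContinuousOn g (skel ((d+1)*(q-1)) (d-1)) →
      (∀ x ∈ skel ((d+1)*(q-1)) (d-1), ‖g x - f x‖ < ε) →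
      ∀ P : Finset (Finset (Fin ((d+1)*(q-1)+1))),
        IsWindingPartition d q g P → IsWindingPartition d q f P := by
  have h : ∀ᶠ g in uniformNhdsOn (skel ((d+1)*(q-1)) (d-1)) f,
      ∀ P, ContinuousOn g (skel ((d+1)*(q-1)) (d-1)) →
        IsWindingPartition d q g P → IsWindingPartition d q f P := by
    refine eventually_all.2 fun P => ?_
    by_cases hP : IsWindingPartition d q f P
    · exact Eventually.of_forall fun _ _ _ => hP
    · exact (eventually_not_isWindingPartition hd hf hP).mono fun _ h hg hgP => absurd hgP (h hg)
  obtain ⟨ε, hε, hε_spec⟩ := (hasBasis_uniformNhdsOn _ f).eventually_iff.1 h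
  exact ⟨ε, hε, fun g hg hgf P => hε_spec hgf P hg⟩

/-- Approximation lemma: small perturbations of a map on the `(d-1)`-skeleton
create no new winding partitions. -/
theorem winding_partition_stable (d q : ℕ) (hd : 1 ≤ d) (hq : 1 ≤ q)
    (f : (Fin ((d+1)*(q-1)+1) → ℝ) → Euc d)
    (hf : ContinuousOn f (skel ((d+1)*(q-1)) (d-1))) :
    ∃ ε > (0:ℝ), ∀ g : (Fin ((d+1)*(q-1)+1) → ℝ) → Euc d,
      ContinuousOn g (skel ((d+1)*(q-1)) (d-1)) →
      (∀ x ∈ skel ((d+1)*(q-1)) (d-1), ‖g x - f x‖ < ε) →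
      ∀ P : Finset (Finset (Fin ((d+1)*(q-1)+1))),
        IsWindingPartition d q g P → IsWindingPartition d q f P :=
  winding_partition_stable_general d q hd f hf
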